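/- Let ‖·‖ be a seminorm on the real vector space of finitely supported functions [0,T] → ℝ. Then there exist constants A₁, A₂ > 0 with A₁‖η‖_D ≤ ‖η‖ ≤ A₂‖η‖_D for every ±1-valued event sequence η on [0,T] if and only if the following three conditions hold: (i) sup{‖η‖ : η a nonzero ±1-valued event sequence on [0,T] with alternating signs} < ∞; (ii) inf{‖η‖ / #supp(η) : η a nonzero event sequence on [0,T] all of whose values are +1} > 0; (iii) there is a constant c > 0 such that for every ±1-valued event sequence η on [0,T], every interval I ⊆ [0,T], and all m, n ∈ ℕ, every event sequence η′ obtained from the restriction η·1_I by m successive (+−)-transcription steps followed by n successive (−+)-transcription steps satisfies ‖η′‖ ≤ c‖η‖. -/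

import Mathlib

open Set Function Filter Classical

/-- The next SOD sampling time after time `s` for input `f`, threshold `θ`, on `[0,T]`:
the infimum of `{t ∈ (s,T] : |f t - f s| ≥ θ}` if this set is nonempty, `none` otherwise. -/
noncomputable def sodNext (T θ : ℝ) (f : ℝ → ℝ) (s : ℝ) : Option ℝ :=
  if (∃ t ∈ Set.Ioc s T, θ ≤ |f t - f s|) then
    some (sInf {t | t ∈ Set.Ioc s T ∧ θ ≤ |f t - f s|})
  else none

/-- The `k`-th SOD sampling time (`t_0 = 0`), `none` if the recursion has stopped before `k`. -/
noncomputable def sodTime (T θ : ℝ) (f : ℝ → ℝ) : ℕ → Option ℝ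
  | 0 => some 0
  | n + 1 => (sodTime T θ f n).bind (sodNext T θ f)

/-- The SOD output event sequence `Φ_θ(f)` : it takes the value `f t_k - f t_{k-1}` at
each sampling time `t_k`, `k ≥ 1`, and `0` elsewhere. -/
noncomputable def sodOut (T θ : ℝ) (f : ℝ → ℝ) : ℝ → ℝ := fun t =>
  if h : ∃ k : ℕ, ∃ s : ℝ, sodTime T θ f k = some s ∧ sodNext T θ f s = some t
  then f t - f h.choose_spec.choose
  else 0

/-- Membership in `F[0,T]`: continuous on `[0,T]` with `f 0 = 0`. -/
def memF (T : ℝ) (f : ℝ → ℝ) : Prop :=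
  ContinuousOn f (Set.Icc 0 T) ∧ f 0 = 0

/-- An event sequence on `[0,T]`: finitely supported with support in `[0,T]`. -/
def IsEventSeq (T : ℝ) (η : ℝ → ℝ) : Prop :=
  (Function.support η).Finite ∧ Function.support η ⊆ Set.Icc 0 T

/-- `η` is `±1`-valued on its support. -/
def IsPM (η : ℝ → ℝ) : Prop :=
  ∀ t ∈ Function.support η, η t = 1 ∨ η t = -1

/-- Weyl's discrepancy norm `‖η‖_D = sup_{0 ≤ a ≤ b ≤ T} |Σ_{t ∈ [a,b]} η t|`. -/
noncomputable def discNorm (T : ℝ) (η : ℝ → ℝ) : ℝ :=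
  sSup {x | ∃ a b : ℝ, 0 ≤ a ∧ a ≤ b ∧ b ≤ T ∧ x = |∑ᶠ t ∈ Set.Icc a b, η t|}

/-- Alexiewicz norm `‖η‖_A = sup_{a ∈ [0,T]} |Σ_{t ∈ [0,a]} η t|`. -/
noncomputable def alexNorm (T : ℝ) (η : ℝ → ℝ) : ℝ :=
  sSup {x | ∃ a : ℝ, 0 ≤ a ∧ a ≤ T ∧ x = |∑ᶠ t ∈ Set.Icc 0 a, η t|}

/-- The values of `η` at consecutive support points alternate in sign. -/
def Alternating (η : ℝ → ℝ) : Prop :=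
  ∀ s u : ℝ, s ∈ Function.support η → u ∈ Function.support η → s < u →
    (∀ t ∈ Function.support η, ¬ (s < t ∧ t < u)) → η s * η u < 0

/-- One `(+−)`-transcription step: erase a `+1` followed (with no support in between) by a `−1`. -/
def StepPM (η η' : ℝ → ℝ) : Prop :=
  ∃ s u : ℝ, s < u ∧ η s = 1 ∧ η u = -1 ∧ (∀ t : ℝ, s < t → t < u → η t = 0) ∧
    η' = Function.update (Function.update η s 0) u 0

/-- One `(−+)`-transcription step: erase a `−1` followed (with no support in between) by a `+1`. -/
def StepMP (η η' : ℝ → ℝ) : Prop :=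
  ∃ s u : ℝ, s < u ∧ η s = -1 ∧ η u = 1 ∧ (∀ t : ℝ, s < t → t < u → η t = 0) ∧
    η' = Function.update (Function.update η s 0) u 0

/-- `StepsN R n x y` : `y` is obtained from `x` by `n` successive `R`-steps. -/
def StepsN (R : (ℝ → ℝ) → (ℝ → ℝ) → Prop) : ℕ → (ℝ → ℝ) → (ℝ → ℝ) → Prop
  | 0, x, y => x = y
  | n + 1, x, z => ∃ y, R x y ∧ StepsN R n y z

/-- Uniform distance `‖f − g‖_∞` over `[0,T]`. -/
noncomputable def unifDist (T : ℝ) (f g : ℝ → ℝ) : ℝ :=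
  sSup {x | ∃ t ∈ Set.Icc 0 T, x = |f t - g t|}

/-!
Restricting a `±1`-valued `η` to an interval `[a, b]` and then cancelling adjacent `(+1, −1)` pairs,
followed by adjacent `(−1, +1)` pairs, leaves the sum over `[a, b]` unchanged and ends with a
sequence of one sign, hence with exactly `|∑_{[a,b]} η|` points; so (ii) and (iii) bound
`‖η‖_D` by a multiple of `‖η‖`. For the other bound, give each support point `t` the level
`max (S(t⁻)) (S(t))` of the running sum `S`. Between two points of the same level and the same
sign the running sum must cross that level again, so the points of each level alternate in sign,
and since `S` ranges over an interval of length `‖η‖_D` there are at most `‖η‖_D` levels; (i) and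
the triangle inequality then bound `‖η‖` by a multiple of `‖η‖_D`. Conversely, restriction to an
interval and transcription steps do not increase `‖·‖_D`, alternating sequences have `‖η‖_D ≤ 1`,
and `k` ones have `‖η‖_D = k`, which gives (i)–(iii).
-/

lemma finsum_mem_indicator_eq_inter {α M : Type*} [AddCommMonoid M] (s I : Set α) (f : α → M) :
    ∑ᶠ t ∈ s, I.indicator f t = ∑ᶠ t ∈ s ∩ I, f t := by
  rw [finsum_mem_def, finsum_mem_def, indicator_indicator]

lemma support_indicator_subset_support {α M : Type*} [Zero M] {f : α → M} (I : Set α) :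
    support (I.indicator f) ⊆ support f := by
  rw [support_indicator]
  exact inter_subset_right

lemma abs_finsum_mem_le_finsum_abs {α : Type*} {η : α → ℝ} (hfin : (support η).Finite)
    (s : Set α) : |∑ᶠ t ∈ s, η t| ≤ ∑ᶠ t, |η t| := by
  have hsub : support (s.indicator η) ⊆ hfin.toFinset := by simp
  rw [finsum_mem_def, finsum_eq_sum_of_support_subset _ hsub,
    finsum_eq_sum_of_support_subset (fun t => |η t|) (s := hfin.toFinset) (by simp)]
  refine (Finset.abs_sum_le_sum_abs _ _).trans (Finset.sum_le_sum fun t _ => ?_)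
  by_cases ht : t ∈ s <;> simp [ht]

lemma ordConnected_Icc_diff_Icc {α : Type*} [LinearOrder α] {a b s u : α}
    (h : ¬ Icc s u ⊆ Icc a b) : (Icc a b \ Icc s u).OrdConnected := by
  refine ⟨fun x hx y hy z hz => ⟨ordConnected_Icc.out hx.1 hy.1 hz, fun hzsu => h ?_⟩⟩
  have hxs : x < s := lt_of_not_ge fun hsx => hx.2 ⟨hsx, hz.1.trans hzsu.2⟩
  have huy : u < y := lt_of_not_ge fun hyu => hy.2 ⟨hzsu.1.trans hz.2, hyu⟩
  exact Icc_subset_Icc (hx.1.1.trans hxs.le) (huy.le.trans hy.1.2)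

lemma exists_inter_support_eq_Icc {α M : Type*} [LinearOrder α] [Zero M] {η : α → M}
    (hfin : (support η).Finite) {I : Set α} (hI : I.OrdConnected)
    (hne : (I ∩ support η).Nonempty) :
    ∃ a ∈ I ∩ support η, ∃ b ∈ I ∩ support η, a ≤ b ∧ I ∩ support η = Icc a b ∩ support η := by
  obtain ⟨a, ha, ha_min⟩ := exists_min_image _ id (hfin.inter_of_right I) hne
  obtain ⟨b, hb, hb_max⟩ := exists_max_image _ id (hfin.inter_of_right I) hne
  refine ⟨a, ha, b, hb, ha_min b hb, Set.ext fun t => ⟨fun ht => ?_, fun ht => ?_⟩⟩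
  · exact ⟨⟨ha_min t ht, hb_max t ht⟩, ht.2⟩
  · exact ⟨hI.out ha.1 hb.1 ht.1, ht.2⟩

lemma Set.Finite.exists_consecutive_change {α : Type*} [LinearOrder α] {S : Set α}
    (hS : S.Finite) {Q : α → Prop} {x y : α} (hx : x ∈ S) (hy : y ∈ S) (hxy : x ≤ y)
    (hQx : Q x) (hQy : ¬ Q y) :
    ∃ w ∈ S, ∃ t ∈ S, x ≤ w ∧ w < t ∧ t ≤ y ∧ (∀ z ∈ S, ¬ (w < z ∧ z < t)) ∧ Q w ∧ ¬ Q t := by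
  obtain ⟨t, ⟨htS, hxt, hty, hQt⟩, ht_min⟩ := exists_min_image
    {z | z ∈ S ∧ x ≤ z ∧ z ≤ y ∧ ¬ Q z} id (hS.subset fun z hz => hz.1) ⟨y, hy, hxy, le_rfl, hQy⟩
  have hxt' : x < t := lt_of_le_of_ne hxt (by rintro rfl; exact hQt hQx)
  obtain ⟨w, ⟨hwS, hxw, hwt⟩, hw_max⟩ := exists_max_image
    {z | z ∈ S ∧ x ≤ z ∧ z < t} id (hS.subset fun z hz => hz.1) ⟨x, hx, le_rfl, hxt'⟩
  refine ⟨w, hwS, t, htS, hxw, hwt, hty, fun z hz ⟨hwz, hzt⟩ => ?_, ?_, hQt⟩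
  · exact (hw_max z ⟨hz, hxw.trans hwz.le, hzt⟩).not_gt hwz
  · by_contra hQw
    exact (ht_min w ⟨hwS, hxw, hwt.le.trans hty, hQw⟩).not_gt hwt

section DiscrepancyNorm

variable {T : ℝ} {η : ℝ → ℝ}

lemma le_discNorm (hfin : (support η).Finite) {a b : ℝ} (ha : 0 ≤ a) (hab : a ≤ b)
    (hb : b ≤ T) : |∑ᶠ t ∈ Icc a b, η t| ≤ discNorm T η :=
  le_csSup ⟨∑ᶠ t, |η t|, by
    rintro _ ⟨a, b, -, -, -, rfl⟩
    exact abs_finsum_mem_le_finsum_abs hfin _⟩ ⟨a, b, ha, hab, hb, rfl⟩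

lemma discNorm_le (hT : 0 ≤ T) {y : ℝ}
    (h : ∀ a b, 0 ≤ a → a ≤ b → b ≤ T → |∑ᶠ t ∈ Icc a b, η t| ≤ y) : discNorm T η ≤ y :=
  csSup_le ⟨_, 0, 0, le_rfl, le_rfl, hT, rfl⟩ fun _ ⟨a, b, ha, hab, hb, hx⟩ =>
    hx ▸ h a b ha hab hb

lemma discNorm_nonneg (hT : 0 ≤ T) (hfin : (support η).Finite) : 0 ≤ discNorm T η :=
  (abs_nonneg _).trans (le_discNorm hfin le_rfl le_rfl hT)

lemma abs_finsum_mem_le_discNorm (hT : 0 ≤ T) (hE : IsEventSeq T η) {I : Set ℝ}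
    (hI : I.OrdConnected) : |∑ᶠ t ∈ I, η t| ≤ discNorm T η := by
  rw [← finsum_mem_inter_support]
  rcases (I ∩ support η).eq_empty_or_nonempty with h | hne
  · rw [h, finsum_mem_empty, abs_zero]
    exact discNorm_nonneg hT hE.1
  obtain ⟨a, ha, b, hb, hab, hIab⟩ := exists_inter_support_eq_Icc hE.1 hI hne
  rw [hIab, finsum_mem_inter_support]
  exact le_discNorm hE.1 (hE.2 ha.2).1 hab (hE.2 hb.2).2

lemma abs_finsum_mem_sub_le_discNorm (hT : 0 ≤ T) (hE : IsEventSeq T η) {A B : Set ℝ}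
    (hA : IsLowerSet A) (hB : IsLowerSet B) :
    |∑ᶠ t ∈ A, η t - ∑ᶠ t ∈ B, η t| ≤ discNorm T η := by
  wlog hBA : B ⊆ A generalizing A B
  · rw [abs_sub_comm]
    exact this hB hA ((hA.total hB).resolve_right hBA)
  rw [← finsum_mem_add_sdiff' hBA (hE.1.inter_of_right A), add_sub_cancel_left]
  exact abs_finsum_mem_le_discNorm hT hE (hA.ordConnected.inter hB.compl.ordConnected)

end DiscrepancyNorm

section Transcription

variable {T : ℝ} {η η' : ℝ → ℝ}

lemma IsEventSeq.indicator (hE : IsEventSeq T η) (I : Set ℝ) : IsEventSeq T (I.indicator η) :=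
  ⟨hE.1.subset (support_indicator_subset_support I),
    (support_indicator_subset_support I).trans hE.2⟩

lemma IsPM.indicator (hP : IsPM η) (I : Set ℝ) : IsPM (I.indicator η) := by
  intro t ht
  rw [support_indicator] at ht
  rw [indicator_of_mem ht.1]
  exact hP t ht.2

lemma discNorm_indicator_le (hT : 0 ≤ T) (hE : IsEventSeq T η) {I : Set ℝ}
    (hI : I.OrdConnected) : discNorm T (I.indicator η) ≤ discNorm T η :=
  discNorm_le hT fun a b _ _ _ => by
    rw [finsum_mem_indicator_eq_inter]
    exact abs_finsum_mem_le_discNorm hT hE (ordConnected_Icc.inter hI)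

def ErasesZeroSumBlock (η η' : ℝ → ℝ) : Prop :=
  ∃ s u, s < u ∧ η s ≠ 0 ∧ ∑ᶠ t ∈ Icc s u, η t = 0 ∧ η' = (Icc s u)ᶜ.indicator η

lemma erasesZeroSumBlock_update {s u : ℝ} (hsu : s < u) (hs : η s ≠ 0) (hsum : η s + η u = 0)
    (hgap : ∀ t, s < t → t < u → η t = 0) :
    ErasesZeroSumBlock η (update (update η s 0) u 0) := by
  have hu : η u ≠ 0 := fun hu => hs (by linarith)
  have hblock : Icc s u ∩ support η = {s, u} := by
    ext t
    simp only [mem_inter_iff, mem_Icc, mem_support, mem_insert_iff, mem_singleton_iff]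
    constructor
    · rintro ⟨⟨hst, htu⟩, ht⟩
      by_contra! hne
      exact ht (hgap t (lt_of_le_of_ne hst hne.1.symm) (lt_of_le_of_ne htu hne.2))
    · rintro (rfl | rfl)
      exacts [⟨⟨le_rfl, hsu.le⟩, hs⟩, ⟨⟨hsu.le, le_rfl⟩, hu⟩]
  refine ⟨s, u, hsu, hs, ?_, funext fun t => ?_⟩
  · rw [← finsum_mem_inter_support, hblock, finsum_mem_pair hsu.ne, hsum]
  · by_cases htu : t = u
    · subst htu
      simp [hsu.le]
    by_cases hts : t = s
    · subst hts
      simp [hsu.le, hsu.ne]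
    rw [update_of_ne htu, update_of_ne hts]
    by_cases ht : t ∈ Icc s u
    · rw [indicator_of_notMem (not_not_intro ht)]
      exact hgap t (lt_of_le_of_ne ht.1 (Ne.symm hts)) (lt_of_le_of_ne ht.2 htu)
    · rw [indicator_of_mem ht]

lemma StepPM.erasesZeroSumBlock (h : StepPM η η') : ErasesZeroSumBlock η η' := by
  obtain ⟨s, u, hsu, hs, hu, hgap, rfl⟩ := h
  exact erasesZeroSumBlock_update hsu (by simp [hs]) (by simp [hs, hu]) hgap

lemma StepMP.erasesZeroSumBlock (h : StepMP η η') : ErasesZeroSumBlock η η' := by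
  obtain ⟨s, u, hsu, hs, hu, hgap, rfl⟩ := h
  exact erasesZeroSumBlock_update hsu (by simp [hs]) (by simp [hs, hu]) hgap

namespace ErasesZeroSumBlock

lemma isEventSeq (h : ErasesZeroSumBlock η η') (hE : IsEventSeq T η) : IsEventSeq T η' := by
  obtain ⟨s, u, -, -, -, rfl⟩ := h
  exact hE.indicator _

lemma isPM (h : ErasesZeroSumBlock η η') (hP : IsPM η) : IsPM η' := by
  obtain ⟨s, u, -, -, -, rfl⟩ := h
  exact hP.indicator _

lemma apply_of_mem_support (h : ErasesZeroSumBlock η η') {t : ℝ} (ht : t ∈ support η') :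
    η' t = η t := by
  obtain ⟨s, u, -, -, -, rfl⟩ := h
  rw [support_indicator] at ht
  exact indicator_of_mem ht.1 η

lemma ncard_support_lt (h : ErasesZeroSumBlock η η') (hfin : (support η).Finite) :
    (support η').ncard < (support η).ncard := by
  obtain ⟨s, u, hsu, hs, -, rfl⟩ := h
  rw [support_indicator]
  exact ncard_lt_ncard (inter_ssubset_right_iff.2 fun hsub =>
    (hsub hs) ⟨le_rfl, hsu.le⟩) hfin

lemma finsum_eq (h : ErasesZeroSumBlock η η') (hfin : (support η).Finite) :
    ∑ᶠ t, η' t = ∑ᶠ t, η t := by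
  obtain ⟨s, u, -, -, hsum, rfl⟩ := h
  rw [← finsum_mem_univ, finsum_mem_indicator_eq_inter, univ_inter, ← finsum_mem_univ η,
    ← finsum_mem_add_sdiff' (subset_univ (Icc s u)) (hfin.inter_of_right _), hsum, zero_add,
    compl_eq_univ_sdiff]

lemma discNorm_le (h : ErasesZeroSumBlock η η') (hT : 0 ≤ T) (hE : IsEventSeq T η) :
    discNorm T η' ≤ discNorm T η := by
  obtain ⟨s, u, -, -, hsum, rfl⟩ := h
  refine _root_.discNorm_le hT fun a b ha hab hb => ?_
  rw [finsum_mem_indicator_eq_inter, ← sdiff_eq]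
  by_cases hsub : Icc s u ⊆ Icc a b
  · have hsplit := finsum_mem_add_sdiff' hsub (hE.1.inter_of_right _)
    rw [hsum, zero_add] at hsplit
    rw [hsplit]
    exact le_discNorm hE.1 ha hab hb
  · exact abs_finsum_mem_le_discNorm hT hE (ordConnected_Icc_diff_Icc hsub)

end ErasesZeroSumBlock

lemma StepsN.preserves {R : (ℝ → ℝ) → (ℝ → ℝ) → Prop} {P : (ℝ → ℝ) → Prop}
    (h : ∀ x y, R x y → P x → P y) : ∀ {n x y}, StepsN R n x y → P x → P y
  | 0, _, _, hxy, hx => hxy ▸ hx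
  | _ + 1, x, _, ⟨y, hxy, hyz⟩, hx => StepsN.preserves h hyz (h x y hxy hx)

lemma StepsN.exists_of_decreasing {R : (ℝ → ℝ) → (ℝ → ℝ) → Prop} {P Q : (ℝ → ℝ) → Prop}
    (μ : (ℝ → ℝ) → ℕ) (h : ∀ x, P x → ¬ Q x → ∃ y, R x y ∧ P y ∧ μ y < μ x) :
    ∀ x, P x → ∃ n y, StepsN R n x y ∧ Q y := by
  intro x
  induction hk : μ x using Nat.strong_induction_on generalizing x with
  | _ k ih =>
    intro hx
    by_cases hQ : Q x
    · exact ⟨0, x, rfl, hQ⟩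
    obtain ⟨y, hxy, hy, hlt⟩ := h x hx hQ
    obtain ⟨n, z, hyz, hz⟩ := ih _ (hk ▸ hlt) y rfl hy
    exact ⟨n + 1, z, ⟨y, hxy, hyz⟩, hz⟩

lemma StepsN.erasesZeroSumBlock_invariants {R : (ℝ → ℝ) → (ℝ → ℝ) → Prop}
    (hR : ∀ x y, R x y → ErasesZeroSumBlock x y) (hT : 0 ≤ T) {n : ℕ} (h : StepsN R n η η')
    (hE : IsEventSeq T η) (hP : IsPM η) :
    IsEventSeq T η' ∧ IsPM η' ∧ discNorm T η' ≤ discNorm T η ∧ ∑ᶠ t, η' t = ∑ᶠ t, η t :=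
  h.preserves (P := fun x => IsEventSeq T x ∧ IsPM x ∧ discNorm T x ≤ discNorm T η ∧
      ∑ᶠ t, x t = ∑ᶠ t, η t)
    (fun x y hxy ⟨hEx, hPx, hDx, hSx⟩ => ⟨(hR x y hxy).isEventSeq hEx, (hR x y hxy).isPM hPx,
      ((hR x y hxy).discNorm_le hT hEx).trans hDx, ((hR x y hxy).finsum_eq hEx.1).trans hSx⟩)
    ⟨hE, hP, le_rfl, rfl⟩

lemma transcription_invariants (hT : 0 ≤ T) (hE : IsEventSeq T η) (hP : IsPM η) {m n : ℕ}
    {ζ : ℝ → ℝ} (h₁ : StepsN StepPM m η ζ) (h₂ : StepsN StepMP n ζ η') :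
    IsEventSeq T η' ∧ IsPM η' ∧ discNorm T η' ≤ discNorm T η ∧ ∑ᶠ t, η' t = ∑ᶠ t, η t := by
  obtain ⟨hEζ, hPζ, hDζ, hSζ⟩ :=
    h₁.erasesZeroSumBlock_invariants (fun _ _ h => h.erasesZeroSumBlock) hT hE hP
  obtain ⟨hE', hP', hD', hS'⟩ :=
    h₂.erasesZeroSumBlock_invariants (fun _ _ h => h.erasesZeroSumBlock) hT hEζ hPζ
  exact ⟨hE', hP', hD'.trans hDζ, hS'.trans hSζ⟩

end Transcription

section ConstantSign

variable {T : ℝ} {η : ℝ → ℝ}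

lemma exists_adjacent_of_lt (hfin : (support η).Finite) (hP : IsPM η) {v : ℝ}
    (hv : v = 1 ∨ v = -1) {s u : ℝ} (hsu : s < u) (hs : η s = v) (hu : η u = -v) :
    ∃ s' u', s' < u' ∧ η s' = v ∧ η u' = -v ∧ ∀ t, s' < t → t < u' → η t = 0 := by
  have hv0 : v ≠ 0 := by rcases hv with rfl | rfl <;> norm_num
  have hmem : ∀ {t}, η t = v ∨ η t = -v → t ∈ support η := by
    rintro t (h | h) <;> simp [mem_support, h, hv0]
  obtain ⟨w, -, t, ht, -, hwt, -, hgap, hQw, hQt⟩ := hfin.exists_consecutive_change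
    (Q := fun z => η z = v) (hmem (Or.inl hs)) (hmem (Or.inr hu)) hsu.le hs
    (by rw [hu]; exact fun h => hv0 (by linarith))
  refine ⟨w, t, hwt, hQw, ?_, fun z hwz hzt => ?_⟩
  · rcases hP t ht with h | h <;> rcases hv with rfl | rfl <;> simp_all
  · by_contra hz
    exact hgap z hz ⟨hwz, hzt⟩

def NoPlusBeforeMinus (η : ℝ → ℝ) : Prop :=
  ∀ s u, s < u → η s = 1 → η u ≠ -1

def HasConstantSign (η : ℝ → ℝ) : Prop :=
  (∀ t ∈ support η, η t = 1) ∨ (∀ t ∈ support η, η t = -1)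

lemma exists_stepsN_stepPM_noPlusBeforeMinus (hE : IsEventSeq T η) (hP : IsPM η) :
    ∃ m ζ, StepsN StepPM m η ζ ∧ NoPlusBeforeMinus ζ := by
  refine StepsN.exists_of_decreasing (P := fun x => IsEventSeq T x ∧ IsPM x)
    (fun x => (support x).ncard) (fun x ⟨hEx, hPx⟩ hx => ?_) η ⟨hE, hP⟩
  simp only [NoPlusBeforeMinus, not_forall, not_not] at hx
  obtain ⟨s, u, hsu, hs, hu⟩ := hx
  obtain ⟨s', u', hsu', hs', hu', hgap⟩ :=
    exists_adjacent_of_lt hEx.1 hPx (Or.inl rfl) hsu hs hu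
  obtain ⟨y, hstep⟩ : ∃ y, StepPM x y := ⟨_, s', u', hsu', hs', hu', hgap, rfl⟩
  have h := hstep.erasesZeroSumBlock
  exact ⟨y, hstep, ⟨h.isEventSeq hEx, h.isPM hPx⟩, h.ncard_support_lt hEx.1⟩

lemma exists_stepsN_stepMP_hasConstantSign (hE : IsEventSeq T η) (hP : IsPM η)
    (hη : NoPlusBeforeMinus η) : ∃ n η', StepsN StepMP n η η' ∧ HasConstantSign η' := by
  refine StepsN.exists_of_decreasing
    (P := fun x => IsEventSeq T x ∧ IsPM x ∧ NoPlusBeforeMinus x)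
    (fun x => (support x).ncard) (fun x ⟨hEx, hPx, hx⟩ hQx => ?_) η ⟨hE, hP, hη⟩
  simp only [HasConstantSign, not_or, not_forall] at hQx
  obtain ⟨⟨t₁, ht₁, h₁⟩, ⟨t₂, ht₂, h₂⟩⟩ := hQx
  replace h₁ : x t₁ = -1 := (hPx t₁ ht₁).resolve_left h₁
  replace h₂ : x t₂ = 1 := (hPx t₂ ht₂).resolve_right h₂
  have hlt : t₁ < t₂ := by
    rcases lt_trichotomy t₁ t₂ with h | rfl | h
    · exact h
    · linarith
    · exact absurd h₁ (hx t₂ t₁ h h₂)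
  obtain ⟨s', u', hsu', hs', hu', hgap⟩ :=
    exists_adjacent_of_lt hEx.1 hPx (Or.inr rfl) hlt h₁ (by rw [h₂, neg_neg])
  obtain ⟨y, hstep⟩ : ∃ y, StepMP x y := ⟨_, s', u', hsu', hs', by rw [hu', neg_neg], hgap, rfl⟩
  have h := hstep.erasesZeroSumBlock
  refine ⟨y, hstep, ⟨h.isEventSeq hEx, h.isPM hPx, fun s u hsu hs hu => ?_⟩,
    h.ncard_support_lt hEx.1⟩
  have hs' : s ∈ support y := by simp [mem_support, hs]
  have hu' : u ∈ support y := by simp [mem_support, hu]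
  exact hx s u hsu (h.apply_of_mem_support hs' ▸ hs) (h.apply_of_mem_support hu' ▸ hu)

lemma exists_transcription_hasConstantSign (hE : IsEventSeq T η) (hP : IsPM η) :
    ∃ m ζ n η', StepsN StepPM m η ζ ∧ StepsN StepMP n ζ η' ∧ HasConstantSign η' := by
  obtain ⟨m, ζ, h₁, hζ⟩ := exists_stepsN_stepPM_noPlusBeforeMinus hE hP
  have hinv := h₁.preserves (P := fun x => IsEventSeq T x ∧ IsPM x)
    (fun x y h ⟨hEx, hPx⟩ => ⟨h.erasesZeroSumBlock.isEventSeq hEx,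
      h.erasesZeroSumBlock.isPM hPx⟩) ⟨hE, hP⟩
  obtain ⟨n, η', h₂, hη'⟩ := exists_stepsN_stepMP_hasConstantSign hinv.1 hinv.2 hζ
  exact ⟨m, ζ, n, η', h₁, h₂, hη'⟩

end ConstantSign

section LowerBound

variable {T : ℝ} {η : ℝ → ℝ}

lemma finsum_eq_ncard_support (hfin : (support η).Finite) (h1 : ∀ t ∈ support η, η t = 1) :
    ∑ᶠ t, η t = (support η).ncard := by
  rw [← finsum_mem_support, finsum_mem_congr rfl h1, ← finsum_one, Nat.cast_finsum_mem hfin,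
    Nat.cast_one]

lemma ncard_support_le_discNorm (hT : 0 ≤ T) (hE : IsEventSeq T η)
    (h1 : ∀ t ∈ support η, η t = 1) : ((support η).ncard : ℝ) ≤ discNorm T η := by
  have h := le_discNorm hE.1 le_rfl hT le_rfl
  rwa [← finsum_mem_inter_support, inter_eq_right.2 hE.2, finsum_mem_support,
    finsum_eq_ncard_support hE.1 h1, abs_of_nonneg (Nat.cast_nonneg _)] at h

variable {p : Seminorm ℝ (ℝ → ℝ)} {ε : ℝ}

lemma mul_abs_finsum_le_of_hasConstantSign
    (h2 : ∀ η : ℝ → ℝ, IsEventSeq T η → η ≠ 0 → (∀ t ∈ support η, η t = 1) →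
      ε ≤ p η / (Nat.card (support η) : ℝ))
    (hE : IsEventSeq T η) (hη : HasConstantSign η) : ε * |∑ᶠ t, η t| ≤ p η := by
  suffices key : ∀ η, IsEventSeq T η → (∀ t ∈ support η, η t = 1) → ε * |∑ᶠ t, η t| ≤ p η by
    rcases hη with h1 | h1
    · exact key η hE h1
    have h := key (-η) ⟨by simpa using hE.1, by simpa using hE.2⟩
      (fun t ht => by simp_all)
    simp only [Pi.neg_apply] at h
    rwa [finsum_neg_distrib, abs_neg, map_neg_eq_map] at h
  intro η hE h1
  rcases eq_or_ne η 0 with rfl | h0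
  · simp
  have hcard : 0 < ((support η).ncard : ℝ) := by
    exact_mod_cast (ncard_pos hE.1).2 (support_nonempty_iff.2 h0)
  have h := h2 η hE h0 h1
  rw [Nat.card_coe_set_eq, le_div_iff₀ hcard] at h
  rwa [finsum_eq_ncard_support hE.1 h1, abs_of_nonneg hcard.le]

lemma div_mul_discNorm_le (hT : 0 ≤ T) {c : ℝ} (hε : 0 < ε) (hc : 0 < c)
    (h2 : ∀ η : ℝ → ℝ, IsEventSeq T η → η ≠ 0 → (∀ t ∈ support η, η t = 1) →
      ε ≤ p η / (Nat.card (support η) : ℝ))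
    (h3 : ∀ η : ℝ → ℝ, IsEventSeq T η → IsPM η →
      ∀ I : Set ℝ, I.OrdConnected → I ⊆ Icc 0 T →
      ∀ m n : ℕ, ∀ ζ η' : ℝ → ℝ,
        StepsN StepPM m (I.indicator η) ζ → StepsN StepMP n ζ η' → p η' ≤ c * p η)
    (hE : IsEventSeq T η) (hP : IsPM η) : ε / c * discNorm T η ≤ p η := by
  have hD : discNorm T η ≤ c * p η / ε := discNorm_le hT fun a b ha _ hb => by
    obtain ⟨m, ζ, n, η', h₁, h₂, hη'⟩ :=
      exists_transcription_hasConstantSign (hE.indicator (Icc a b)) (hP.indicator _)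
    obtain ⟨hE', -, -, hsum⟩ :=
      transcription_invariants hT (hE.indicator (Icc a b)) (hP.indicator _) h₁ h₂
    rw [le_div_iff₀' hε, finsum_mem_def, ← hsum]
    exact (mul_abs_finsum_le_of_hasConstantSign h2 hE' hη').trans
      (h3 η hE hP _ ordConnected_Icc (Icc_subset_Icc ha hb) m n ζ η' h₁ h₂)
  calc ε / c * discNorm T η ≤ ε / c * (c * p η / ε) := by gcongr
    _ = p η := by field_simp

end LowerBound

namespace EventSeq

variable {T : ℝ} {η : ℝ → ℝ}

noncomputable def intSign (η : ℝ → ℝ) (t : ℝ) : ℤ := SignType.sign (η t)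

noncomputable def prefixSumLE (η : ℝ → ℝ) (t : ℝ) : ℤ := ∑ᶠ s ∈ Iic t, intSign η s

noncomputable def prefixSumLT (η : ℝ → ℝ) (t : ℝ) : ℤ := ∑ᶠ s ∈ Iio t, intSign η s

noncomputable def level (η : ℝ → ℝ) (t : ℝ) : ℤ := max (prefixSumLE η t) (prefixSumLT η t)

noncomputable def levelPart (η : ℝ → ℝ) (L : ℤ) : ℝ → ℝ := {t | level η t = L}.indicator η

lemma support_intSign : support (intSign η) = support η := by
  ext t
  simp only [mem_support, intSign, ne_eq, ← sign_eq_zero_iff (a := η t)]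
  generalize SignType.sign (η t) = s
  cases s <;> decide

lemma cast_intSign (hP : IsPM η) (t : ℝ) : (intSign η t : ℝ) = η t := by
  by_cases ht : t ∈ support η
  · rcases hP t ht with h | h <;> simp [intSign, h]
  · simp [intSign, notMem_support.1 ht]

lemma cast_finsum_mem_intSign (hfin : (support η).Finite) (hP : IsPM η) (A : Set ℝ) :
    ((∑ᶠ t ∈ A, intSign η t : ℤ) : ℝ) = ∑ᶠ t ∈ A, η t := by
  have h := (Int.castAddHom ℝ).map_finsum_mem' (f := intSign η) (s := A)
    (by rw [support_intSign]; exact hfin.inter_of_right A)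
  simpa [cast_intSign hP] using h

lemma abs_finsum_mem_intSign_sub_le_discNorm (hT : 0 ≤ T) (hE : IsEventSeq T η) (hP : IsPM η)
    {A B : Set ℝ} (hA : IsLowerSet A) (hB : IsLowerSet B) :
    |((∑ᶠ t ∈ A, intSign η t - ∑ᶠ t ∈ B, intSign η t : ℤ) : ℝ)| ≤ discNorm T η := by
  rw [Int.cast_sub, cast_finsum_mem_intSign hE.1 hP, cast_finsum_mem_intSign hE.1 hP]
  exact abs_finsum_mem_sub_le_discNorm hT hE hA hB

lemma prefixSumLE_eq (hfin : (support η).Finite) (t : ℝ) :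
    prefixSumLE η t = prefixSumLT η t + intSign η t := by
  rw [prefixSumLE, ← Iio_insert, finsum_mem_insert' (s := Iio t) _ (lt_irrefl t)
    (by rw [support_intSign]; exact hfin.inter_of_right _), add_comm, prefixSumLT]

lemma finsum_mem_Icc_intSign {x y : ℝ} (hfin : (support η).Finite) (hxy : x ≤ y) :
    ∑ᶠ t ∈ Icc x y, intSign η t = prefixSumLE η y - prefixSumLT η x := by
  have hIcc : Iic y \ Iio x = Icc x y := by
    ext
    simp
  rw [eq_sub_iff_add_eq', prefixSumLE, prefixSumLT, ← hIcc]
  exact finsum_mem_add_sdiff' (fun z hz => (lt_of_lt_of_le hz hxy).le)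
    (by rw [support_intSign]; exact hfin.inter_of_right _)

lemma prefixSumLT_eq_of_consecutive {w t : ℝ} (hwt : w < t)
    (hgap : ∀ z ∈ support η, ¬ (w < z ∧ z < t)) : prefixSumLT η t = prefixSumLE η w := by
  have hsupp : Iio t ∩ support (intSign η) = Iic w ∩ support (intSign η) := by
    ext z
    simp only [mem_inter_iff, mem_Iio, mem_Iic, support_intSign]
    exact ⟨fun ⟨hzt, hz⟩ => ⟨not_lt.1 fun hwz => hgap z hz ⟨hwz, hzt⟩, hz⟩,
      fun ⟨hzw, hz⟩ => ⟨hzw.trans_lt hwt, hz⟩⟩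
  rw [prefixSumLT, prefixSumLE, ← finsum_mem_inter_support, hsupp, finsum_mem_inter_support]

lemma level_spec (hfin : (support η).Finite) (hP : IsPM η) {t : ℝ} (ht : t ∈ support η) :
    (η t = 1 ∧ level η t = prefixSumLE η t ∧ prefixSumLE η t = prefixSumLT η t + 1) ∨
    (η t = -1 ∧ level η t = prefixSumLT η t ∧ prefixSumLE η t = prefixSumLT η t - 1) := by
  have hLE := prefixSumLE_eq hfin t
  have hsign := cast_intSign hP t
  rcases hP t ht with h | h
  · have : intSign η t = 1 := by exact_mod_cast hsign.trans h
    exact Or.inl ⟨h, by rw [level]; omega, by omega⟩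
  · have : intSign η t = -1 := by exact_mod_cast hsign.trans h
    exact Or.inr ⟨h, by rw [level]; omega, by omega⟩

lemma exists_isLowerSet_level_eq (t : ℝ) :
    ∃ A, IsLowerSet A ∧ level η t = ∑ᶠ s ∈ A, intSign η s :=
  (max_choice (prefixSumLE η t) (prefixSumLT η t)).elim
    (fun h => ⟨Iic t, isLowerSet_Iic t, h⟩) (fun h => ⟨Iio t, isLowerSet_Iio t, h⟩)

lemma exists_isLowerSet_level_sub_one_eq (hfin : (support η).Finite) (hP : IsPM η) {t : ℝ}
    (ht : t ∈ support η) : ∃ A, IsLowerSet A ∧ level η t - 1 = ∑ᶠ s ∈ A, intSign η s := by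
  rcases level_spec hfin hP ht with ⟨-, h1, h2⟩ | ⟨-, h1, h2⟩
  · exact ⟨Iio t, isLowerSet_Iio t, show _ = prefixSumLT η t by omega⟩
  · exact ⟨Iic t, isLowerSet_Iic t, show _ = prefixSumLE η t by omega⟩

lemma level_eq_of_straddle (hfin : (support η).Finite) (hP : IsPM η) {t : ℝ}
    (ht : t ∈ support η) {L : ℤ} (h : L ≤ prefixSumLT η t ↔ ¬ L ≤ prefixSumLE η t) :
    level η t = L := by
  by_cases hc : L ≤ prefixSumLT η t
  · have := h.1 hc
    rcases level_spec hfin hP ht with ⟨-, h1, h2⟩ | ⟨-, h1, h2⟩ <;> omega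
  · have := not_not.1 (mt h.2 hc)
    rcases level_spec hfin hP ht with ⟨-, h1, h2⟩ | ⟨-, h1, h2⟩ <;> omega

lemma exists_level_eq_between (hfin : (support η).Finite) (hP : IsPM η) {s v : ℝ}
    (hs : s ∈ support η) (hv : v ∈ support η) (hsv : s ≤ v) {L : ℤ}
    (h : L ≤ prefixSumLE η s ↔ ¬ L ≤ prefixSumLE η v) :
    ∃ t ∈ support η, s < t ∧ t ≤ v ∧ level η t = L := by
  obtain ⟨w, -, t, ht, hsw, hwt, htv, hgap, hQw, hQt⟩ := hfin.exists_consecutive_change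
    (Q := fun z => L ≤ prefixSumLE η z ↔ L ≤ prefixSumLE η s) hs hv hsv Iff.rfl (by tauto)
  refine ⟨t, ht, hsw.trans_lt hwt, htv, level_eq_of_straddle hfin hP ht ?_⟩
  rw [prefixSumLT_eq_of_consecutive hwt hgap]
  tauto

lemma alternating_levelPart (hfin : (support η).Finite) (hP : IsPM η) (L : ℤ) :
    Alternating (levelPart η L) := by
  intro s u hs hu hsu hgap
  simp only [levelPart, support_indicator, mem_inter_iff, mem_ofPred_eq] at hs hu hgap
  rw [levelPart, indicator_of_mem (show s ∈ {t | level η t = L} from hs.1),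
    indicator_of_mem (show u ∈ {t | level η t = L} from hu.1)]
  -- `v` is the support point just before `u`
  obtain ⟨v, hv, u', hu', hsv, hvu', hu'u, hgap', -, hu'⟩ := hfin.exists_consecutive_change
    (Q := (· < u)) hs.2 hu.2 hsu.le hsu (lt_irrefl u)
  obtain rfl : u' = u := le_antisymm hu'u (not_lt.1 hu')
  have hLT := prefixSumLT_eq_of_consecutive hvu' hgap'
  have hbetween : ¬ (L ≤ prefixSumLE η s ↔ ¬ L ≤ prefixSumLE η v) := fun h => by
    obtain ⟨t, ht, hst, htv, hlt⟩ := exists_level_eq_between hfin hP hs.2 hv hsv h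
    exact hgap t ⟨hlt, ht⟩ ⟨hst, htv.trans_lt hvu'⟩
  rcases level_spec hfin hP hs.2 with ⟨hηs, h1, h2⟩ | ⟨hηs, h1, h2⟩ <;>
    rcases level_spec hfin hP hu.2 with ⟨hηu, h3, h4⟩ | ⟨hηu, h3, h4⟩
  · exact (hbetween ⟨fun _ => by omega, fun _ => by omega⟩).elim
  · norm_num [hηs, hηu]
  · norm_num [hηs, hηu]
  · exact (hbetween ⟨fun _ => by omega, fun _ => by omega⟩).elim

lemma level_eq_of_alternating (hfin : (support η).Finite) (hP : IsPM η) (hA : Alternating η)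
    {s u : ℝ} (hs : s ∈ support η) (hu : u ∈ support η) (hsu : s ≤ u) :
    level η s = level η u := by
  by_contra hne
  obtain ⟨w, hw, t, ht, -, hwt, -, hgap, hQw, hQt⟩ := hfin.exists_consecutive_change
    (Q := fun z => level η z = level η s) hs hu hsu rfl (Ne.symm hne)
  have hLT := prefixSumLT_eq_of_consecutive hwt hgap
  have hmul := hA w t hw ht hwt hgap
  rcases level_spec hfin hP hw with ⟨hηw, h1, h2⟩ | ⟨hηw, h1, h2⟩ <;>
    rcases level_spec hfin hP ht with ⟨hηt, h3, h4⟩ | ⟨hηt, h3, h4⟩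
  · norm_num [hηw, hηt] at hmul
  · exact hQt (by omega)
  · exact hQt (by omega)
  · norm_num [hηw, hηt] at hmul

lemma alternating_discNorm_le_one (hT : 0 ≤ T) (hE : IsEventSeq T η) (hP : IsPM η)
    (hA : Alternating η) : discNorm T η ≤ 1 := by
  refine discNorm_le hT fun a b _ _ _ => ?_
  rw [← finsum_mem_inter_support]
  rcases (Icc a b ∩ support η).eq_empty_or_nonempty with h | hne
  · simp [h]
  obtain ⟨x, hx, y, hy, hxy, hI⟩ := exists_inter_support_eq_Icc hE.1 ordConnected_Icc hne
  rw [hI, finsum_mem_inter_support, ← cast_finsum_mem_intSign hE.1 hP,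
    finsum_mem_Icc_intSign hE.1 hxy]
  have hlevel := level_eq_of_alternating hE.1 hP hA hx.2 hy.2 hxy
  have hle : |prefixSumLE η y - prefixSumLT η x| ≤ 1 := by
    rcases level_spec hE.1 hP hx.2 with ⟨-, h1, h2⟩ | ⟨-, h1, h2⟩ <;>
      rcases level_spec hE.1 hP hy.2 with ⟨-, h3, h4⟩ | ⟨-, h3, h4⟩ <;>
      exact abs_le.2 ⟨by omega, by omega⟩
  exact_mod_cast hle

lemma sum_levelPart {m M : ℤ} (hrange : ∀ t ∈ support η, level η t ∈ Finset.Ioc m M) :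
    ∑ L ∈ Finset.Ioc m M, levelPart η L = η := by
  ext t
  have h := Finset.indicator_biUnion_apply (Finset.Ioc m M) (fun L => level η ⁻¹' {L}) (f := η)
    (pairwiseDisjoint_fiber (level η) _) t
  rw [indicator_eq_self.2 fun t ht => by simpa using hrange t ht] at h
  rw [Finset.sum_apply]
  exact h.symm

lemma seminorm_le_mul_discNorm (p : Seminorm ℝ (ℝ → ℝ)) (hT : 0 ≤ T) {K : ℝ} (hK : 0 ≤ K)
    (hbound : ∀ η : ℝ → ℝ, IsEventSeq T η → IsPM η → η ≠ 0 → Alternating η → p η ≤ K)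
    (hE : IsEventSeq T η) (hP : IsPM η) : p η ≤ K * discNorm T η := by
  rcases (support η).eq_empty_or_nonempty with h0 | hne
  · obtain rfl : η = 0 := support_eq_empty_iff.1 h0
    rw [map_zero]
    exact mul_nonneg hK (discNorm_nonneg hT hE.1)
  obtain ⟨t₁, ht₁, hmax⟩ := exists_max_image _ (level η) hE.1 hne
  obtain ⟨t₀, ht₀, hmin⟩ := exists_min_image _ (level η) hE.1 hne
  have hpart : ∀ L, p (levelPart η L) ≤ K := fun L => by
    rcases eq_or_ne (levelPart η L) 0 with h | h
    · rw [h, map_zero]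
      exact hK
    exact hbound _ (hE.indicator _) (hP.indicator _) h (alternating_levelPart hE.1 hP L)
  have hrange : ∀ t ∈ support η, level η t ∈ Finset.Ioc (level η t₀ - 1) (level η t₁) :=
    fun t ht => Finset.mem_Ioc.2 ⟨by linarith [hmin t ht], hmax t ht⟩
  have hcard : ((Finset.Ioc (level η t₀ - 1) (level η t₁)).card : ℝ) ≤ discNorm T η := by
    obtain ⟨A, hA, hA_eq⟩ := exists_isLowerSet_level_eq (η := η) t₁
    obtain ⟨B, hB, hB_eq⟩ := exists_isLowerSet_level_sub_one_eq hE.1 hP ht₀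
    have h := abs_finsum_mem_intSign_sub_le_discNorm hT hE hP hA hB
    rw [← hA_eq, ← hB_eq] at h
    rw [Int.card_Ioc, ← Int.cast_natCast, Int.toNat_of_nonneg (by linarith [hmin t₁ ht₁])]
    exact (le_abs_self _).trans h
  calc p η = p (∑ L ∈ Finset.Ioc (level η t₀ - 1) (level η t₁), levelPart η L) := by
        rw [sum_levelPart hrange]
    _ ≤ ∑ L ∈ Finset.Ioc (level η t₀ - 1) (level η t₁), p (levelPart η L) :=
        Finset.le_sum_of_subadditive p (map_zero p).le (map_add_le_add p) _ _
    _ ≤ (Finset.Ioc (level η t₀ - 1) (level η t₁)).card * K :=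
        (Finset.sum_le_card_nsmul _ _ _ fun L _ => hpart L).trans_eq (nsmul_eq_mul _ _)
    _ ≤ K * discNorm T η := by
        rw [mul_comm]
        exact mul_le_mul_of_nonneg_left hcard hK

end EventSeq

/-- characterization of seminorms equivalent to the discrepancy norm:
a seminorm `‖·‖` satisfies `A₁‖η‖_D ≤ ‖η‖ ≤ A₂‖η‖_D` on ±1-valued event sequences for some
`A₁, A₂ > 0` iff (i) `‖·‖` is bounded on nonzero alternating ±1-valued event sequences,
(ii) `inf ‖η‖ / #supp(η) > 0` over nonzero event sequences with all values `+1`, and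
(iii) there is `c > 0` bounding `‖η'‖ ≤ c‖η‖` for any `η'` obtained from a restriction
`η·1_I` (`I ⊆ [0,T]` an interval) by `m` `(+−)`-steps followed by `n` `(−+)`-steps. -/
theorem stmt6 (T : ℝ) (hT : 0 < T) (p : Seminorm ℝ (ℝ → ℝ)) :
    (∃ A₁ A₂ : ℝ, 0 < A₁ ∧ 0 < A₂ ∧
      ∀ η : ℝ → ℝ, IsEventSeq T η → IsPM η →
        A₁ * discNorm T η ≤ p η ∧ p η ≤ A₂ * discNorm T η) ↔
    (BddAbove {x | ∃ η : ℝ → ℝ, IsEventSeq T η ∧ IsPM η ∧ η ≠ 0 ∧ Alternating η ∧ x = p η} ∧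
     (∃ ε : ℝ, 0 < ε ∧ ∀ η : ℝ → ℝ, IsEventSeq T η → η ≠ 0 →
        (∀ t ∈ Function.support η, η t = 1) →
        ε ≤ p η / (Nat.card (Function.support η) : ℝ)) ∧
     (∃ c : ℝ, 0 < c ∧ ∀ η : ℝ → ℝ, IsEventSeq T η → IsPM η →
        ∀ I : Set ℝ, I.OrdConnected → I ⊆ Set.Icc 0 T →
        ∀ m n : ℕ, ∀ ζ η' : ℝ → ℝ,
          StepsN StepPM m (Set.indicator I η) ζ → StepsN StepMP n ζ η' →
          p η' ≤ c * p η)) := by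
  constructor
  · rintro ⟨A₁, A₂, hA₁, hA₂, h⟩
    refine ⟨⟨A₂, ?_⟩, ⟨A₁, hA₁, fun η hE hne h1 => ?_⟩, ⟨A₂ / A₁, by positivity, ?_⟩⟩
    · rintro _ ⟨η, hE, hP, -, hA, rfl⟩
      have := EventSeq.alternating_discNorm_le_one hT.le hE hP hA
      nlinarith [(h η hE hP).2]
    · have hcard : 0 < ((support η).ncard : ℝ) := by
        exact_mod_cast (ncard_pos hE.1).2 (support_nonempty_iff.2 hne)
      rw [Nat.card_coe_set_eq, le_div_iff₀ hcard]
      have := ncard_support_le_discNorm hT.le hE h1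
      nlinarith [(h η hE fun t ht => Or.inl (h1 t ht)).1]
    · intro η hE hP I hI _ m n ζ η' h₁ h₂
      obtain ⟨hE', hP', hD', -⟩ :=
        transcription_invariants hT.le (hE.indicator I) (hP.indicator I) h₁ h₂
      have hD := hD'.trans (discNorm_indicator_le hT.le hE hI)
      calc p η' ≤ A₂ * discNorm T η := (h η' hE' hP').2.trans (by gcongr)
        _ ≤ A₂ / A₁ * p η := by
          rw [div_mul_eq_mul_div, le_div_iff₀ hA₁, mul_assoc, mul_comm (discNorm T η)]
          gcongr
          exact (h η hE hP).1
  · rintro ⟨⟨M, hM⟩, ⟨ε, hε, h2⟩, ⟨c, hc, h3⟩⟩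
    refine ⟨ε / c, max M 1, by positivity, by positivity, fun η hE hP =>
      ⟨div_mul_discNorm_le hT.le hε hc h2 h3 hE hP, ?_⟩⟩
    exact EventSeq.seminorm_le_mul_discNorm p hT.le (by positivity)
      (fun η hE hP hne hA => (hM ⟨η, hE, hP, hne, hA, rfl⟩).trans (le_max_left M 1)) hE hP
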